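/- arXiv:2603.19818 — 6 statements merged into one kernel-verified Lean document; each statement's English description precedes it below -/
import Mathlib

section
/- Let $\rho : G \to \mathrm{GL}(V)$ be an $n$-dimensional representation of a group $G$ over a field $k$, and let $0 < m < n$. Then $\rho$ is $m$-thick if and only if $\rho$ is $(n-m)$-thick. -/
def Representation.IsIJThick {k G V : Type*} [Field k] [AddCommGroup V] [Module k V]
    [Group G] (ρ : Representation k G V) (i j : ℕ) : Prop :=
  ∀ V₁ V₂ : Submodule k V, Module.finrank k ↥V₁ = i → Module.finrank k ↥V₂ = j →
    ∃ g : G, Submodule.map (ρ g) V₁ ⊓ V₂ = ⊥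

/-- `ρ` is `m`-thick iff it is `(m, n-m)`-thick, where `n = dim V`. -/
def Representation.IsMThick {k G V : Type*} [Field k] [AddCommGroup V] [Module k V]
    [Group G] (ρ : Representation k G V) (m : ℕ) : Prop :=
  ρ.IsIJThick m (Module.finrank k V - m)

/-- `ρ` is thick iff it is `m`-thick for all `0 < m < dim V`. -/
def Representation.IsThick {k G V : Type*} [Field k] [AddCommGroup V] [Module k V]
    [Group G] (ρ : Representation k G V) : Prop :=
  ∀ m : ℕ, 0 < m → m < Module.finrank k V → ρ.IsMThick m

lemma Representation.IsIJThick.symm {k G V : Type*} [Field k] [AddCommGroup V] [Module k V]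
    [Group G] {ρ : Representation k G V} {i j : ℕ} (h : ρ.IsIJThick i j) :
    ρ.IsIJThick j i := by
  intro V₁ V₂ h1 h2
  obtain ⟨g, hg⟩ := h V₂ V₁ h2 h1
  refine ⟨g⁻¹, ?_⟩
  have hinj : Function.Injective (ρ g⁻¹) := by
    intro x y hxy
    have := congrArg (ρ g) hxy
    simpa [← Module.End.mul_apply, ← map_mul] using this
  have := congrArg (Submodule.map (ρ g⁻¹)) hg
  rw [Submodule.map_inf _ hinj, Submodule.map_bot, ← Submodule.map_comp] at this
  have hcomp : (ρ g⁻¹ ∘ₗ ρ g) = LinearMap.id := by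
    ext x
    simp [← Module.End.mul_apply, ← map_mul]
  rw [hcomp, Submodule.map_id] at this
  rw [inf_comm]
  exact this

theorem mThick_iff_sub_mThick {k G V : Type*} [Field k] [AddCommGroup V] [Module k V]
    [Group G] [FiniteDimensional k V] (ρ : Representation k G V) (n m : ℕ)
    (hn : Module.finrank k V = n) (h0 : 0 < m) (hm : m < n) :
    ρ.IsMThick m ↔ ρ.IsMThick (n - m) := by
  unfold Representation.IsMThick
  rw [hn]
  have : n - (n - m) = m := Nat.sub_sub_self hm.le
  rw [this]
  exact ⟨fun h => h.symm, fun h => h.symm⟩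
end

section
/- Let $\rho : G \to \mathrm{GL}(V)$ be an $n$-dimensional representation over a field $k$ and let $i, j$ be positive integers with $i + j \le n$. Suppose $\rho$ is not $(i,j)$-thick. If $m$ is an integer with $\min\{i,j\} \le m \le n - \max\{i,j\}$ or $\max\{i,j\} \le m \le n - \min\{i,j\}$, then $\rho$ is not $m$-thick. In particular, $\rho$ is not thick. -/
open Module Submodule


lemma exists_superspace {k V : Type*} [Field k] [AddCommGroup V] [Module k V]
    [FiniteDimensional k V] (W : Submodule k V) (d : ℕ) (h1 : finrank k W ≤ d)
    (h2 : d ≤ finrank k V) : ∃ W' : Submodule k V, W ≤ W' ∧ finrank k W' = d := by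
  induction d, h1 using Nat.le_induction with
  | base => exact ⟨W, le_rfl, rfl⟩
  | succ d hd ih =>
    obtain ⟨W', hWW', hW'⟩ := ih (le_of_lt h2)
    have hne : W' ≠ ⊤ := by
      intro hT
      rw [hT, finrank_top] at hW'
      omega
    obtain ⟨x, hx⟩ : ∃ x, x ∉ W' := by
      by_contra hc
      push_neg at hc
      exact hne (eq_top_iff.2 fun y _ => hc y)
    refine ⟨(k ∙ x) ⊔ W', hWW'.trans le_sup_right, ?_⟩
    have hx0 : x ≠ 0 := fun h0 => hx (h0 ▸ W'.zero_mem)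
    have hinf : (k ∙ x) ⊓ W' = ⊥ := by
      rw [eq_bot_iff]
      rintro y ⟨hy1, hy2⟩
      obtain ⟨c, rfl⟩ := mem_span_singleton.1 hy1
      rcases eq_or_ne c 0 with rfl | hc
      · simp
      · exact absurd (by simpa [smul_smul, inv_mul_cancel₀ hc] using W'.smul_mem c⁻¹ hy2) hx
    have := Submodule.finrank_sup_add_finrank_inf_eq (k ∙ x) W'
    rw [hinf, finrank_bot, finrank_span_singleton hx0] at this
    omega

lemma isIJThick_mono {k G V : Type*} [Field k] [AddCommGroup V] [Module k V]
    [Group G] [FiniteDimensional k V] (ρ : Representation k G V) {i j i' j' : ℕ}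
    (h : ρ.IsIJThick i' j') (hii : i ≤ i') (hjj : j ≤ j')
    (hi' : i' ≤ finrank k V) (hj' : j' ≤ finrank k V) : ρ.IsIJThick i j := by
  intro V₁ V₂ h1 h2
  obtain ⟨W₁, hle1, hd1⟩ := exists_superspace V₁ i' (h1 ▸ hii) hi'
  obtain ⟨W₂, hle2, hd2⟩ := exists_superspace V₂ j' (h2 ▸ hjj) hj'
  obtain ⟨g, hg⟩ := h W₁ W₂ hd1 hd2
  exact ⟨g, le_bot_iff.1 (hg ▸ inf_le_inf (Submodule.map_mono hle1) hle2)⟩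

lemma isIJThick_symm {k G V : Type*} [Field k] [AddCommGroup V] [Module k V]
    [Group G] (ρ : Representation k G V) {i j : ℕ}
    (h : ρ.IsIJThick i j) : ρ.IsIJThick j i := by
  intro V₁ V₂ h1 h2
  obtain ⟨g, hg⟩ := h V₂ V₁ h2 h1
  refine ⟨g⁻¹, ?_⟩
  have hinj : Function.Injective (ρ g⁻¹) := by
    intro x y hxy
    have := congrArg (ρ g) hxy
    simpa [← Module.End.mul_apply, ← map_mul] using this
  have hcomp : Submodule.map (ρ g⁻¹) (Submodule.map (ρ g) V₂) = V₂ := by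
    rw [← Submodule.map_comp]
    have : (ρ g⁻¹).comp (ρ g) = LinearMap.id := by
      ext x
      simp [← Module.End.mul_apply, ← map_mul]
    simp [this]
  have := congrArg (Submodule.map (ρ g⁻¹)) hg
  rw [Submodule.map_inf _ hinj, hcomp, Submodule.map_bot] at this
  rw [inf_comm]
  exact this

lemma not_isIJThick_mono {k G V : Type*} [Field k] [AddCommGroup V] [Module k V]
    [Group G] [FiniteDimensional k V] (ρ : Representation k G V) {i j i' j' : ℕ}
    (h : ¬ ρ.IsIJThick i j) (hii : i ≤ i') (hjj : j ≤ j')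
    (hi' : i' ≤ finrank k V) (hj' : j' ≤ finrank k V) : ¬ ρ.IsIJThick i' j' :=
  fun h' => h (isIJThick_mono ρ h' hii hjj hi' hj')

theorem not_mThick_of_not_isIJThick {k G V : Type*} [Field k] [AddCommGroup V]
    [Module k V] [Group G] [FiniteDimensional k V] (ρ : Representation k G V)
    (n i j : ℕ) (hn : Module.finrank k V = n) (hi : 0 < i) (hj : 0 < j)
    (hij : i + j ≤ n) (h : ¬ ρ.IsIJThick i j) :
    (∀ m : ℕ, (min i j ≤ m ∧ m ≤ n - max i j) ∨ (max i j ≤ m ∧ m ≤ n - min i j) →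
      ¬ ρ.IsMThick m) ∧ ¬ ρ.IsThick := by
  have hin : i ≤ n := le_trans (Nat.le_add_right i j) hij
  have hjn : j ≤ n := le_trans (Nat.le_add_left j i) hij
  have key : ∀ m : ℕ, (min i j ≤ m ∧ m ≤ n - max i j) ∨ (max i j ≤ m ∧ m ≤ n - min i j) →
      ¬ ρ.IsMThick m := by
    intro m hm
    unfold Representation.IsMThick
    rw [hn]
    rcases le_total i j with hle | hle
    · rcases hm with ⟨h1, h2⟩ | ⟨h1, h2⟩
      · rw [min_eq_left hle] at h1
        rw [max_eq_right hle] at h2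
        exact not_isIJThick_mono ρ h h1 (by omega) (hn ▸ by omega) (hn ▸ by omega)
      · rw [max_eq_right hle] at h1
        rw [min_eq_left hle] at h2
        intro h'
        exact not_isIJThick_mono ρ h (by omega) (by omega)
          (hn ▸ by omega) (hn ▸ by omega) (isIJThick_symm ρ h')
    · rcases hm with ⟨h1, h2⟩ | ⟨h1, h2⟩
      · rw [min_eq_right hle] at h1
        rw [max_eq_left hle] at h2
        intro h'
        exact not_isIJThick_mono ρ h (by omega) (by omega)
          (hn ▸ by omega) (hn ▸ by omega) (isIJThick_symm ρ h')
      · rw [max_eq_left hle] at h1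
        rw [min_eq_right hle] at h2
        exact not_isIJThick_mono ρ h h1 (by omega) (hn ▸ by omega) (hn ▸ by omega)
  refine ⟨key, fun hthick => ?_⟩
  have hmin : 0 < min i j := lt_min hi hj
  have hlt : min i j < n := by
    rcases le_total i j with hle | hle <;> simp [min_eq_left, min_eq_right, hle] <;> omega
  exact key (min i j) (Or.inl ⟨le_rfl, by omega⟩) (hthick (min i j) hmin (hn ▸ hlt))
end

section
/- Let $\rho : G \to \mathrm{GL}(V)$ be an $n$-dimensional representation over a field $k$, and let $i, j$ be positive integers with $\max\{i,j\} \le n/2$. If $\rho$ is not $(i,j)$-thick, then $\rho$ is not $m$-thick for every integer $m$ with $\min\{i,j\} \le m \le n - \min\{i,j\}$. -/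
open Module Submodule

section Aux

variable {k V : Type*} [Field k] [AddCommGroup V] [Module k V] [FiniteDimensional k V]

lemma aux_exists_superset_finrank_eq (N : Submodule k V) (d : ℕ) (h1 : finrank k N ≤ d)
    (h2 : d ≤ finrank k V) : ∃ N' : Submodule k V, N ≤ N' ∧ finrank k N' = d := by
  induction d with
  | zero =>
    exact ⟨N, le_rfl, le_antisymm h1 (Nat.zero_le _)⟩
  | succ d ih =>
    rcases Nat.lt_or_ge (finrank k N) (d+1) with hlt | hge
    · obtain ⟨N', hle, hrk⟩ := ih (Nat.lt_succ_iff.mp hlt) (le_of_lt h2)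
      have hlt' : finrank k N' < finrank k V := hrk ▸ h2
      obtain ⟨m, hm⟩ := N'.exists_of_finrank_lt hlt'
      have hm0 : m ∉ N' := by simpa using hm 1 one_ne_zero
      have hmne : m ≠ 0 := fun e => hm0 (e ▸ N'.zero_mem)
      refine ⟨N' ⊔ k ∙ m, hle.trans le_sup_left, ?_⟩
      have hinf : N' ⊓ (k ∙ m) = ⊥ := by
        rw [eq_bot_iff]
        rintro x ⟨hx1, hx2⟩
        obtain ⟨r, rfl⟩ := Submodule.mem_span_singleton.mp hx2
        rcases eq_or_ne r 0 with rfl | hr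
        · simp
        · exact absurd hx1 (hm r hr)
      have := Submodule.finrank_sup_add_finrank_inf_eq N' (k ∙ m)
      rw [hinf] at this
      simp [finrank_span_singleton hmne, hrk] at this
      omega
    · exact ⟨N, le_rfl, le_antisymm h1 hge⟩

variable {G : Type*} [Group G]

lemma aux_rep_inj (ρ : Representation k G V) (g : G) : Function.Injective (ρ g) := by
  intro x y hxy
  have : ρ g⁻¹ (ρ g x) = ρ g⁻¹ (ρ g y) := congrArg _ hxy
  simpa [← Module.End.mul_apply, ← map_mul] using this

lemma aux_map_rep_inv (ρ : Representation k G V) (g : G) (N : Submodule k V) :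
    Submodule.map (ρ g⁻¹) (Submodule.map (ρ g) N) = N := by
  rw [← Submodule.map_comp]
  have : (ρ g⁻¹) ∘ₗ (ρ g) = LinearMap.id := by
    ext x
    show ((ρ g⁻¹) * (ρ g)) x = x
    rw [← map_mul, inv_mul_cancel, map_one, Module.End.one_apply]
  simp [this]

lemma aux_thick_symm (ρ : Representation k G V) {i j : ℕ} (h : ρ.IsIJThick j i) :
    ρ.IsIJThick i j := by
  intro V₁ V₂ h1 h2
  obtain ⟨g, hg⟩ := h V₂ V₁ h2 h1
  refine ⟨g⁻¹, ?_⟩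
  have := congrArg (Submodule.map (ρ g⁻¹)) hg
  rwa [Submodule.map_inf _ (aux_rep_inj ρ g⁻¹), aux_map_rep_inv, Submodule.map_bot,
    inf_comm] at this

lemma aux_not_thick_mono (ρ : Representation k G V) {i j i' j' : ℕ} (h : ¬ ρ.IsIJThick i j)
    (hii : i ≤ i') (hjj : j ≤ j') (hi' : i' ≤ finrank k V) (hj' : j' ≤ finrank k V) :
    ¬ ρ.IsIJThick i' j' := by
  simp only [Representation.IsIJThick, not_forall] at h ⊢
  obtain ⟨V₁, V₂, h1, h2, hg⟩ := h
  push_neg at hg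
  obtain ⟨V₁', hle1, hr1⟩ := aux_exists_superset_finrank_eq V₁ i' (h1 ▸ hii) hi'
  obtain ⟨V₂', hle2, hr2⟩ := aux_exists_superset_finrank_eq V₂ j' (h2 ▸ hjj) hj'
  refine ⟨V₁', V₂', hr1, hr2, ?_⟩
  push_neg
  intro g hbot
  have hle : Submodule.map (ρ g) V₁ ⊓ V₂ ≤ Submodule.map (ρ g) V₁' ⊓ V₂' :=
    inf_le_inf (Submodule.map_mono hle1) hle2
  exact hg g (le_bot_iff.mp (hbot ▸ hle))

end Aux

theorem not_mThick_of_not_isIJThick_of_le_half {k G V : Type*} [Field k] [AddCommGroup V]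
    [Module k V] [Group G] [FiniteDimensional k V] (ρ : Representation k G V)
    (n i j : ℕ) (hn : Module.finrank k V = n) (hi : 0 < i) (hj : 0 < j)
    (hmax : 2 * max i j ≤ n) (h : ¬ ρ.IsIJThick i j) :
    ∀ m : ℕ, min i j ≤ m → m ≤ n - min i j → ¬ ρ.IsMThick m := by
  intro m hm1 hm2
  -- normalize to a = min, b = max with ¬ IsIJThick a b
  set a := min i j with ha
  set b := max i j with hb
  have hab : a ≤ b := min_le_max
  have hbn : 2 * b ≤ n := hmax
  have han : a ≤ n := by omega
  have hthick : ¬ ρ.IsIJThick a b := by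
    rcases le_total i j with hij | hij
    · simpa [ha, hb, min_eq_left hij, max_eq_right hij] using h
    · have : ¬ ρ.IsIJThick j i := fun hc => h (aux_thick_symm ρ hc)
      simpa [ha, hb, min_eq_right hij, max_eq_left hij] using this
  have hmn : m ≤ n := le_trans hm2 (Nat.sub_le _ _)
  unfold Representation.IsMThick
  rw [hn]
  rcases le_or_gt b (n - m) with hcase | hcase
  · exact aux_not_thick_mono ρ hthick hm1 hcase (hn ▸ hmn) (hn ▸ (Nat.sub_le _ _))
  · -- n - m < b, so b ≤ m (since 2b ≤ n and m ≤ n), and a ≤ n - m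
    have hbm : b ≤ m := by omega
    have hanm : a ≤ n - m := by omega
    have hthick' : ¬ ρ.IsIJThick b a := fun hc => hthick (aux_thick_symm ρ hc)
    exact aux_not_thick_mono ρ hthick' hbm hanm (hn ▸ hmn) (hn ▸ (Nat.sub_le _ _))
end

section
/- Let $X_n = \{1, \dots, n\}$ and let $F(n)$ denote the minimum cardinality of a family $F$ of 3-element subsets of $X_n$ such that every pair of distinct elements of $X_n$ is contained in some member of $F$ (a covering design $C(n,3,2)$). Then for every $k \ge 2$, $F(2k+1) \le k^2$ and $F(2k) \le k^2 - 1$. -/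
/-!
When two new points `a`, `b` are added to a ground set of size `m`, the old triples still
cover every old pair, and the `m` triples `{v, a, b}`, one per old point `v`, cover every pair
meeting `{a, b}`. Hence `F(m + 2) ≤ F(m) + m`, and starting from the explicit covers
`F(4) ≤ 3` and `F(5) ≤ 4` this telescopes to `F(2k + 1) ≤ k²` and `F(2k) ≤ k² - 1`.
-/

/-- The minimal number of triples from an n-element set needed so that every
pair of distinct elements is contained in at least one triple. -/
noncomputable def coverNum (n : ℕ) : ℕ :=
  sInf {c : ℕ | ∃ F : Finset (Finset (Fin n)), F.card = c ∧ (∀ f ∈ F, f.card = 3) ∧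
    ∀ i j : Fin n, i ≠ j → ∃ f ∈ F, i ∈ f ∧ j ∈ f}

open Finset

section TripleCover

variable {α β : Type*}

def IsTripleCover (F : Finset (Finset α)) : Prop :=
  (∀ f ∈ F, f.card = 3) ∧ ∀ i j : α, i ≠ j → ∃ f ∈ F, i ∈ f ∧ j ∈ f

theorem IsTripleCover.map_equiv {F : Finset (Finset α)} (hF : IsTripleCover F) (e : α ≃ β) :
    IsTripleCover (F.map e.finsetCongr.toEmbedding) := by
  refine ⟨fun f hf => ?_, fun i j hij => ?_⟩
  · obtain ⟨g, hg, rfl⟩ := mem_map.mp hf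
    simpa using hF.1 g hg
  · obtain ⟨f, hf, hi, hj⟩ := hF.2 (e.symm i) (e.symm j) (e.symm.injective.ne hij)
    exact ⟨f.map e.toEmbedding, mem_map_of_mem _ hf, by simpa using hi, by simpa using hj⟩

variable [DecidableEq α]

def addTwoPoints [Fintype α] (F : Finset (Finset α)) : Finset (Finset (Option (Option α))) :=
  F.map (mapEmbedding (Function.Embedding.some.trans Function.Embedding.some)).toEmbedding ∪
    univ.image fun v => {some (some v), some none, none}

theorem card_addTwoPoints_le [Fintype α] (F : Finset (Finset α)) :
    (addTwoPoints F).card ≤ F.card + Fintype.card α :=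
  (card_union_le _ _).trans <| by
    rw [card_map]
    exact Nat.add_le_add_left card_image_le _

theorem isTripleCover_addTwoPoints [Fintype α] [Nonempty α] {F : Finset (Finset α)}
    (hF : IsTripleCover F) : IsTripleCover (addTwoPoints F) := by
  have new_mem (v : α) : {some (some v), some none, none} ∈ addTwoPoints F :=
    mem_union_right _ (mem_image_of_mem _ (mem_univ v))
  refine ⟨fun f hf => ?_, fun i j hij => ?_⟩
  · rcases mem_union.mp hf with hf | hf
    · obtain ⟨g, hg, rfl⟩ := mem_map.mp hf
      simpa using hF.1 g hg
    · obtain ⟨v, -, rfl⟩ := mem_image.mp hf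
      simp
  · rcases i with _ | _ | v <;> rcases j with _ | _ | w
    case some.some.some.some =>
      obtain ⟨f, hf, hv, hw⟩ := hF.2 v w (by simpa using hij)
      exact ⟨_, mem_union_left _ (mem_map_of_mem _ hf), by simpa using hv, by simpa using hw⟩
    all_goals first
      | exact absurd rfl hij
      | exact ⟨_, new_mem v, by simp, by simp⟩
      | exact ⟨_, new_mem w, by simp, by simp⟩
      | exact ⟨_, new_mem (Classical.arbitrary α), by simp, by simp⟩

end TripleCover

def HasTripleCover (n c : ℕ) : Prop :=
  ∃ F : Finset (Finset (Fin n)), IsTripleCover F ∧ F.card ≤ c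

theorem coverNum_le_of_hasTripleCover {n c : ℕ} (h : HasTripleCover n c) : coverNum n ≤ c := by
  obtain ⟨F, ⟨hF3, hFpairs⟩, hc⟩ := h
  exact le_trans (Nat.sInf_le ⟨F, rfl, hF3, hFpairs⟩) hc

theorem HasTripleCover.mono {n c c' : ℕ} (h : HasTripleCover n c) (hc : c ≤ c') :
    HasTripleCover n c' := by
  obtain ⟨F, hF, hFc⟩ := h
  exact ⟨F, hF, hFc.trans hc⟩

theorem HasTripleCover.add_two {n c : ℕ} (hn : 0 < n) (h : HasTripleCover n c) :
    HasTripleCover (n + 2) (c + n) := by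
  obtain ⟨F, hF, hFc⟩ := h
  have : Nonempty (Fin n) := ⟨⟨0, hn⟩⟩
  let e : Option (Option (Fin n)) ≃ Fin (n + 2) :=
    ((finSuccEquiv (n + 1)).trans (Equiv.optionCongr (finSuccEquiv n))).symm
  refine ⟨(addTwoPoints F).map e.finsetCongr.toEmbedding,
    (isTripleCover_addTwoPoints hF).map_equiv e, ?_⟩
  rw [card_map]
  exact (card_addTwoPoints_le F).trans (by rw [Fintype.card_fin]; omega)

theorem hasTripleCover_four : HasTripleCover 4 3 :=
  ⟨{{0, 1, 2}, {0, 1, 3}, {0, 2, 3}}, by unfold IsTripleCover; decide, by decide⟩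

theorem hasTripleCover_five : HasTripleCover 5 4 :=
  ⟨{{0, 1, 2}, {0, 3, 4}, {1, 3, 4}, {2, 3, 4}}, by unfold IsTripleCover; decide, by decide⟩

theorem hasTripleCover_odd {k : ℕ} (hk : 2 ≤ k) : HasTripleCover (2 * k + 1) (k ^ 2) := by
  induction k, hk using Nat.le_induction with
  | base => exact hasTripleCover_five
  | succ k _ ih =>
    have h := ih.add_two (by omega)
    rwa [show 2 * k + 1 + 2 = 2 * (k + 1) + 1 by ring,
      show k ^ 2 + (2 * k + 1) = (k + 1) ^ 2 by ring] at h

theorem hasTripleCover_even {k : ℕ} (hk : 2 ≤ k) : HasTripleCover (2 * k) (k ^ 2 - 1) := by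
  induction k, hk using Nat.le_induction with
  | base => exact hasTripleCover_four
  | succ k hk ih =>
    have h := (ih.add_two (by omega)).mono (show k ^ 2 - 1 + 2 * k ≤ (k + 1) ^ 2 - 1 by
      have : 1 ≤ k ^ 2 := Nat.one_le_pow _ _ (by omega)
      rw [add_sq]; omega)
    rwa [show 2 * k + 2 = 2 * (k + 1) by ring] at h

theorem coverNum_le (k : ℕ) (hk : 2 ≤ k) :
    coverNum (2 * k + 1) ≤ k ^ 2 ∧ coverNum (2 * k) ≤ k ^ 2 - 1 :=
  ⟨coverNum_le_of_hasTripleCover (hasTripleCover_odd hk),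
    coverNum_le_of_hasTripleCover (hasTripleCover_even hk)⟩
end

section
/- Let $F(n)$ be the minimum number of 3-element subsets of an $n$-element set needed so that every pair of elements lies in some chosen triple. Then $F(n) \le \frac{n^2-4}{4}$ for every integer $n \ge 3$. -/
lemma step_cover (n : ℕ) (hn : 1 ≤ n)
    (F : Finset (Finset (Fin n)))
    (h3 : ∀ f ∈ F, f.card = 3)
    (hcov : ∀ i j : Fin n, i ≠ j → ∃ f ∈ F, i ∈ f ∧ j ∈ f) :
    ∃ G : Finset (Finset (Fin (n+2))), G.card ≤ F.card + n ∧
      (∀ f ∈ G, f.card = 3) ∧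
      ∀ i j : Fin (n+2), i ≠ j → ∃ f ∈ G, i ∈ f ∧ j ∈ f := by
  have hle : n ≤ n + 2 := by omega
  let e : Fin n ↪ Fin (n+2) := ⟨Fin.castLE hle, Fin.castLE_injective hle⟩
  let a : Fin (n+2) := ⟨n, by omega⟩
  let b : Fin (n+2) := ⟨n+1, by omega⟩
  let newt : Fin n → Finset (Fin (n+2)) := fun x => {e x, a, b}
  let G := F.image (fun f => f.map e) ∪ (Finset.univ : Finset (Fin n)).image newt
  have hnewcard : ∀ x : Fin n, (newt x).card = 3 := by
    intro x
    have hx := x.isLt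
    have h1 : e x ≠ a := by
      intro h; have : x.val = n := congrArg Fin.val h; omega
    have h2 : e x ≠ b := by
      intro h; have : x.val = n + 1 := congrArg Fin.val h; omega
    have h3 : a ≠ b := by
      intro h; have : n = n + 1 := congrArg Fin.val h; omega
    rw [show newt x = {e x, a, b} from rfl,
        Finset.card_insert_of_notMem (by simp [h1, h2]),
        Finset.card_insert_of_notMem (by simp [h3])]
    simp
  have hbig : ∀ k : Fin (n+2), ¬ k.val < n → ∀ x : Fin n, k ∈ newt x := by
    intro k hk x
    have := k.isLt
    simp only [newt, Finset.mem_insert, Finset.mem_singleton]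
    rcases Nat.lt_or_ge k.val (n+1) with h | h
    · right; left; exact Fin.ext (show k.val = n by omega)
    · right; right; exact Fin.ext (show k.val = n + 1 by omega)
  have memG_new : ∀ x : Fin n, newt x ∈ G := fun x =>
    Finset.mem_union_right _ (Finset.mem_image_of_mem _ (Finset.mem_univ x))
  refine ⟨G, ?_, ?_, ?_⟩
  · calc G.card ≤ (F.image (fun f => f.map e)).card +
        ((Finset.univ : Finset (Fin n)).image newt).card := Finset.card_union_le _ _
      _ ≤ F.card + n := by
        gcongr
        · exact Finset.card_image_le
        · calc ((Finset.univ : Finset (Fin n)).image newt).card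
              ≤ (Finset.univ : Finset (Fin n)).card := Finset.card_image_le
            _ = n := by simp
  · intro f hf
    rw [show G = F.image (fun f => f.map e) ∪
        (Finset.univ : Finset (Fin n)).image newt from rfl, Finset.mem_union] at hf
    rcases hf with hf | hf
    · obtain ⟨g, hg, rfl⟩ := Finset.mem_image.mp hf
      rw [Finset.card_map]; exact h3 g hg
    · obtain ⟨x, _, rfl⟩ := Finset.mem_image.mp hf
      exact hnewcard x
  · intro i j hij
    by_cases hi : i.val < n
    · by_cases hj : j.val < n
      · obtain ⟨f, hf, h1, h2⟩ := hcov ⟨i.val, hi⟩ ⟨j.val, hj⟩ (by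
          intro h
          exact hij (Fin.ext (Fin.mk_eq_mk.mp h)))
        refine ⟨f.map e, Finset.mem_union_left _ (Finset.mem_image_of_mem _ hf), ?_, ?_⟩
        · rw [Finset.mem_map]; exact ⟨⟨i.val, hi⟩, h1, Fin.ext rfl⟩
        · rw [Finset.mem_map]; exact ⟨⟨j.val, hj⟩, h2, Fin.ext rfl⟩
      · refine ⟨newt ⟨i.val, hi⟩, memG_new _, ?_, hbig j hj _⟩
        simp only [newt, Finset.mem_insert]
        left; exact Fin.ext rfl
    · by_cases hj : j.val < n
      · refine ⟨newt ⟨j.val, hj⟩, memG_new _, hbig i hi _, ?_⟩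
        simp only [newt, Finset.mem_insert]
        left; exact Fin.ext rfl
      · exact ⟨newt ⟨0, by omega⟩, memG_new _, hbig i hi _, hbig j hj _⟩

lemma exists_cover : ∀ n : ℕ, 3 ≤ n →
    ∃ F : Finset (Finset (Fin n)), (∀ f ∈ F, f.card = 3) ∧
      (∀ i j : Fin n, i ≠ j → ∃ f ∈ F, i ∈ f ∧ j ∈ f) ∧
      4 * F.card + 4 ≤ n ^ 2 := by
  intro n
  induction n using Nat.strong_induction_on with
  | _ n ih =>
    intro hn
    match n, hn with
    | 3, _ =>
      refine ⟨{Finset.univ}, ?_, ?_, ?_⟩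
      · intro f hf; simp at hf; subst hf; simp
      · intro i j _; exact ⟨Finset.univ, by simp⟩
      · decide
    | 4, _ =>
      refine ⟨{{0,1,2},{0,2,3},{0,1,3}}, ?_, ?_, ?_⟩
      · decide
      · decide
      · decide
    | (m+5), _ =>
      obtain ⟨F, h3, hcov, hcard⟩ := ih (m+3) (by omega) (by omega)
      obtain ⟨G, hGc, hG3, hGcov⟩ := step_cover (m+3) (by omega) F h3 hcov
      exact ⟨G, hG3, hGcov, by nlinarith⟩

theorem coverNum_le_quadratic (n : ℕ) (hn : 3 ≤ n) :
    (coverNum n : ℚ) ≤ ((n : ℚ) ^ 2 - 4) / 4 := by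
  obtain ⟨F, h3, hcov, hcard⟩ := exists_cover n hn
  have hle : coverNum n ≤ F.card := Nat.sInf_le ⟨F, rfl, h3, hcov⟩
  have h1 : (coverNum n : ℚ) ≤ (F.card : ℚ) := by exact_mod_cast hle
  have h2 : (4 * F.card + 4 : ℚ) ≤ (n : ℚ) ^ 2 := by exact_mod_cast hcard
  linarith
end

section
/- For integers $m_1 \ge m_2 \ge 5$, with $d(m_1,m_2) = \frac{(m_1+m_2)!\,(m_1-m_2+1)}{(m_1+1)!\,m_2!}$, one has $d(m_1-1, m_2-1) \ge m_1 + m_2 - 3$. -/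
/-- Dimension of the irreducible representation of the symmetric group attached
to the two-row partition (a, b), via the hook length formula. -/
def specht2Dim (a b : ℕ) : ℚ :=
  ((a + b).factorial * (a - b + 1) : ℚ) / ((a + 1).factorial * b.factorial)

lemma choose_mono_of_le_half {n k l : ℕ} (hkl : k ≤ l) (hl : l ≤ n / 2) :
    n.choose k ≤ n.choose l := by
  induction l, hkl using Nat.le_induction with
  | base => exact le_rfl
  | succ l hkl ih =>
    exact (ih (by omega)).trans (Nat.choose_le_succ_of_lt_half_left (by omega))

lemma key_choose (a b : ℕ) (hb : 4 ≤ b) (hba : b ≤ a) :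
    (a + b - 1) * (a + 1) ≤ (a + b).choose b := by
  have h1 : (a + b).choose 4 ≤ (a + b).choose b := choose_mono_of_le_half hb (by omega)
  obtain ⟨m, hm⟩ : ∃ m, a + b = m + 8 := ⟨a + b - 8, by omega⟩
  have h2 : 24 * ((a + b).choose 4) = (a + b).descFactorial 4 := by
    rw [Nat.descFactorial_eq_factorial_mul_choose]; norm_num [Nat.factorial]
  have h3 : (a + b).descFactorial 4 = (m + 5) * (m + 6) * (m + 7) * (m + 8) := by
    rw [hm]; simp [Nat.descFactorial_succ]; ring
  have h4 : 24 * ((a + b - 1) * (a + 1)) ≤ 24 * ((a + b).choose 4) := by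
    rw [h2, h3]
    calc 24 * ((a + b - 1) * (a + 1)) ≤ 24 * ((m + 7) * (m + 5)) := by
          apply Nat.mul_le_mul_left; apply Nat.mul_le_mul <;> omega
      _ ≤ ((m + 6) * (m + 8)) * ((m + 7) * (m + 5)) := by
          apply Nat.mul_le_mul_right; nlinarith
      _ = (m + 5) * (m + 6) * (m + 7) * (m + 8) := by ring
  omega

lemma key_nat (a b : ℕ) (hb : 4 ≤ b) (hba : b ≤ a) :
    (a + b - 1) * ((a + 1).factorial * b.factorial) ≤ (a + b).factorial * (a - b + 1) := by
  have hfac : (a + b).choose b * b.factorial * a.factorial = (a + b).factorial := by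
    have := Nat.choose_mul_factorial_mul_factorial (Nat.le_add_left b a)
    simpa [Nat.add_sub_cancel] using this
  calc (a + b - 1) * ((a + 1).factorial * b.factorial)
      = ((a + b - 1) * (a + 1)) * (a.factorial * b.factorial) := by
        rw [Nat.factorial_succ]; ring
    _ ≤ (a + b).choose b * (a.factorial * b.factorial) :=
        Nat.mul_le_mul_right _ (key_choose a b hb hba)
    _ = (a + b).factorial * 1 := by rw [← hfac]; ring
    _ ≤ (a + b).factorial * (a - b + 1) := Nat.mul_le_mul_left _ (by omega)

theorem specht2Dim_pred_ge (m₁ m₂ : ℕ) (h₂ : 5 ≤ m₂) (h₁ : m₂ ≤ m₁) :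
    (m₁ + m₂ - 3 : ℚ) ≤ specht2Dim (m₁ - 1) (m₂ - 1) := by
  obtain ⟨a, rfl⟩ : ∃ a, m₁ = a + 1 := ⟨m₁ - 1, by omega⟩
  obtain ⟨b, rfl⟩ : ∃ b, m₂ = b + 1 := ⟨m₂ - 1, by omega⟩
  have hb : 4 ≤ b := by omega
  have hba : b ≤ a := by omega
  simp only [Nat.add_sub_cancel, specht2Dim]
  rw [le_div_iff₀ (by positivity)]
  have key := key_nat a b hb hba
  have h1 : ((a : ℚ) + 1 + (b + 1) - 3) = ((a + b - 1 : ℕ) : ℚ) := by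
    push_cast [Nat.cast_sub (by omega : 1 ≤ a + b)]; ring
  push_cast
  rw [h1]
  calc ((a + b - 1 : ℕ) : ℚ) * ((a + 1).factorial * b.factorial)
      = (((a + b - 1) * ((a + 1).factorial * b.factorial) : ℕ) : ℚ) := by push_cast; ring
    _ ≤ (((a + b).factorial * (a - b + 1) : ℕ) : ℚ) := by exact_mod_cast key
    _ = (a + b).factorial * ((a : ℚ) - b + 1) := by
        push_cast [Nat.cast_sub hba]; ring
end
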